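/- Let p be a probability vector on n ≥ 2 symbols and let l be any codeword-length vector. If −1 < d' ≤ d with d' ≠ 0 and d ≠ 0, then R^{d'}(p,l) ≤ R^{d}(p,l). Moreover, for every d with −1 < d < 0, R^d(p,l) ≤ ∑_i p_i·l_i − H_1(p), and for every d > 0, R^d(p,l) ≥ ∑_i p_i·l_i − H_1(p), where H_1(p) = −∑_i p_i·log₂ p_i is the Shannon entropy. -/

import Mathlib

open Real Finset

noncomputable def expRedundancy (n : ℕ) (d : ℝ) (p : Fin n → ℝ) (l : Fin n → ℕ) : ℝ :=
  (1 / d) * Real.logb 2 (∑ i, (p i) ^ (1 + d) * (2 : ℝ) ^ (d * (l i : ℝ)))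

noncomputable def shannonEntropy (n : ℕ) (p : Fin n → ℝ) : ℝ :=
  -∑ i, p i * Real.logb 2 (p i)

/-! With `x i = p i * 2 ^ l i`, `R^d(p,l)` is `log₂` of the weighted power mean
`M_d(x) = (∑ p i * x i ^ d) ^ (1 / d)`, while `∑ p i * l i - H_1(p) = ∑ p i * log₂ (x i)` is `log₂`
of the weighted geometric mean `M_0(x)`. Everything is then the power mean inequality:
`M_d ≤ M_0 ≤ M_d'` for `d < 0 < d'` is weighted AM–GM, monotonicity on positive exponents is the
generalized mean inequality, and it transfers to negative exponents via `M_(-d)(x) = M_d(x⁻¹)⁻¹`. -/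

/-- `logb 2` of the weighted power mean `(∑ i, w i * x i ^ d) ^ (1 / d)`. -/
noncomputable def logbPowerMean {ι : Type*} [Fintype ι] (w x : ι → ℝ) (d : ℝ) : ℝ :=
  (1 / d) * logb 2 (∑ i, w i * x i ^ d)

namespace logbPowerMean

variable {ι : Type*} [Fintype ι] {w x : ι → ℝ}

theorem sum_mul_rpow_pos (hw : ∀ i, 0 ≤ w i) (hw1 : ∑ i, w i = 1) (hx : ∀ i, 0 < x i)
    (d : ℝ) : 0 < ∑ i, w i * x i ^ d := by
  obtain ⟨j, -, hj⟩ := exists_ne_zero_of_sum_ne_zero (hw1.symm ▸ one_ne_zero)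
  exact sum_pos' (fun i _ => mul_nonneg (hw i) (rpow_pos_of_pos (hx i) d).le)
    ⟨j, mem_univ j, mul_pos ((hw j).lt_of_ne' hj) (rpow_pos_of_pos (hx j) d)⟩

/-- Weighted AM–GM applied to the numbers `x i ^ d`, read through `logb 2`. -/
theorem mul_sum_logb_le_logb_sum_rpow (hw : ∀ i, 0 ≤ w i) (hw1 : ∑ i, w i = 1)
    (hx : ∀ i, 0 < x i) (d : ℝ) :
    d * ∑ i, w i * logb 2 (x i) ≤ logb 2 (∑ i, w i * x i ^ d) := by
  have hxd : ∀ i, 0 < x i ^ d := fun i => rpow_pos_of_pos (hx i) d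
  have hamgm : ∏ i, (x i ^ d) ^ w i ≤ ∑ i, w i * x i ^ d :=
    geom_mean_le_arith_mean_weighted univ w (fun i => x i ^ d) (fun i _ => hw i) hw1
      (fun i _ => (hxd i).le)
  have hprod : 0 < ∏ i, (x i ^ d) ^ w i := prod_pos fun i _ => rpow_pos_of_pos (hxd i) _
  calc d * ∑ i, w i * logb 2 (x i)
      = logb 2 (∏ i, (x i ^ d) ^ w i) := by
        rw [logb_prod _ _ fun i _ => (rpow_pos_of_pos (hxd i) _).ne', mul_sum]
        refine sum_congr rfl fun i _ => ?_
        rw [logb_rpow_eq_mul_logb_of_pos (hxd i), logb_rpow_eq_mul_logb_of_pos (hx i)]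
        ring
    _ ≤ logb 2 (∑ i, w i * x i ^ d) := logb_le_logb_of_le one_lt_two hprod hamgm

theorem le_sum_logb_of_neg (hw : ∀ i, 0 ≤ w i) (hw1 : ∑ i, w i = 1)
    (hx : ∀ i, 0 < x i) {d : ℝ} (hd : d < 0) :
    logbPowerMean w x d ≤ ∑ i, w i * logb 2 (x i) := by
  rw [logbPowerMean, one_div_mul_eq_div, div_le_iff_of_neg hd, mul_comm]
  exact mul_sum_logb_le_logb_sum_rpow hw hw1 hx d

theorem sum_logb_le_of_pos (hw : ∀ i, 0 ≤ w i) (hw1 : ∑ i, w i = 1)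
    (hx : ∀ i, 0 < x i) {d : ℝ} (hd : 0 < d) :
    ∑ i, w i * logb 2 (x i) ≤ logbPowerMean w x d := by
  rw [logbPowerMean, one_div_mul_eq_div, le_div_iff₀ hd, mul_comm]
  exact mul_sum_logb_le_logb_sum_rpow hw hw1 hx d

theorem inv_neg (hx : ∀ i, 0 < x i) (d : ℝ) :
    logbPowerMean w x⁻¹ (-d) = -logbPowerMean w x d := by
  have hpow : ∀ i, x⁻¹ i ^ (-d) = x i ^ d := fun i => by
    rw [Pi.inv_apply, inv_rpow (hx i).le, rpow_neg (hx i).le, inv_inv]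
  simp only [logbPowerMean, hpow]
  ring

theorem mono_of_pos (hw : ∀ i, 0 ≤ w i) (hw1 : ∑ i, w i = 1) (hx : ∀ i, 0 < x i)
    {a b : ℝ} (ha : 0 < a) (hab : a ≤ b) :
    logbPowerMean w x a ≤ logbPowerMean w x b := by
  have hb : 0 < b := ha.trans_le hab
  have hxa : ∀ i, 0 < x i ^ a := fun i => rpow_pos_of_pos (hx i) a
  have hpow : ∀ i, (x i ^ a) ^ (b / a) = x i ^ b := fun i => by
    rw [← rpow_mul (hx i).le, mul_div_cancel₀ _ ha.ne']
  -- the power mean inequality for the exponent `b / a ≥ 1`, applied to the numbers `x i ^ a`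
  have hmean : ∑ i, w i * x i ^ a ≤ (∑ i, w i * x i ^ b) ^ (1 / (b / a)) := by
    simpa only [hpow] using arith_mean_le_rpow_mean univ w (fun i => x i ^ a)
      (fun i _ => hw i) hw1 (fun i _ => (hxa i).le) ((one_le_div ha).mpr hab)
  have hSa := sum_mul_rpow_pos hw hw1 hx a
  have hSb := sum_mul_rpow_pos hw hw1 hx b
  have hlog := logb_le_logb_of_le one_lt_two hSa hmean
  rw [logb_rpow_eq_mul_logb_of_pos hSb, one_div_div] at hlog
  calc logbPowerMean w x a ≤ 1 / a * (a / b * logb 2 (∑ i, w i * x i ^ b)) :=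
        mul_le_mul_of_nonneg_left hlog (by positivity)
    _ = logbPowerMean w x b := by
        rw [logbPowerMean]
        field_simp

theorem mono (hw : ∀ i, 0 ≤ w i) (hw1 : ∑ i, w i = 1) (hx : ∀ i, 0 < x i)
    {a b : ℝ} (hab : a ≤ b) (ha : a ≠ 0) (hb : b ≠ 0) :
    logbPowerMean w x a ≤ logbPowerMean w x b := by
  rcases ha.lt_or_gt with ha | ha
  · rcases hb.lt_or_gt with hb | hb
    · have hinv : ∀ i, 0 < x⁻¹ i := fun i => inv_pos.mpr (hx i)
      have := mono_of_pos hw hw1 hinv (neg_pos.mpr hb) (neg_le_neg hab)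
      rwa [inv_neg hx, inv_neg hx, neg_le_neg_iff] at this
    · exact (le_sum_logb_of_neg hw hw1 hx ha).trans (sum_logb_le_of_pos hw hw1 hx hb)
  · exact mono_of_pos hw hw1 hx ha hab

end logbPowerMean

theorem expRedundancy_eq_logbPowerMean {n : ℕ} {p : Fin n → ℝ} (hp : ∀ i, 0 < p i)
    (l : Fin n → ℕ) (d : ℝ) :
    expRedundancy n d p l = logbPowerMean p (fun i => p i * 2 ^ (l i : ℝ)) d := by
  refine congrArg (1 / d * logb 2 ·) (sum_congr rfl fun i _ => ?_)
  rw [rpow_add (hp i), rpow_one, mul_rpow (hp i).le (by positivity), mul_comm d,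
    rpow_mul zero_le_two]
  ring

theorem sum_mul_logb_mul_two_rpow {n : ℕ} {p : Fin n → ℝ} (hp : ∀ i, 0 < p i)
    (l : Fin n → ℕ) :
    ∑ i, p i * logb 2 (p i * 2 ^ (l i : ℝ)) = ∑ i, p i * (l i : ℝ) - shannonEntropy n p := by
  rw [shannonEntropy, sub_neg_eq_add, ← sum_add_distrib]
  refine sum_congr rfl fun i _ => ?_
  rw [logb_mul (hp i).ne' (by positivity), logb_rpow two_pos (by norm_num)]
  ring

theorem stmt_15_general (n : ℕ)
    (p : Fin n → ℝ) (hp : ∀ i, 0 < p i) (hpsum : ∑ i, p i = 1)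
    (l : Fin n → ℕ) :
    (∀ d' d : ℝ, -1 < d' → d' ≤ d → d' ≠ 0 → d ≠ 0 →
      expRedundancy n d' p l ≤ expRedundancy n d p l) ∧
    (∀ d : ℝ, -1 < d → d < 0 →
      expRedundancy n d p l ≤ (∑ i, p i * (l i : ℝ)) - shannonEntropy n p) ∧
    (∀ d : ℝ, 0 < d →
      (∑ i, p i * (l i : ℝ)) - shannonEntropy n p ≤ expRedundancy n d p l) := by
  have hw : ∀ i, 0 ≤ p i := fun i => (hp i).le
  have hx : ∀ i, 0 < p i * 2 ^ (l i : ℝ) := fun i => by have := hp i; positivity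
  simp only [expRedundancy_eq_logbPowerMean hp, ← sum_mul_logb_mul_two_rpow hp]
  exact ⟨fun d' d _ hle hd' hd => logbPowerMean.mono hw hpsum hx hle hd' hd,
    fun d _ hd => logbPowerMean.le_sum_logb_of_neg hw hpsum hx hd,
    fun d hd => logbPowerMean.sum_logb_le_of_pos hw hpsum hx hd⟩

theorem stmt_15 (n : ℕ) (hn : 2 ≤ n)
    (p : Fin n → ℝ) (hp : ∀ i, 0 < p i) (hpsum : ∑ i, p i = 1)
    (l : Fin n → ℕ) (hl : ∀ i, 1 ≤ l i) :
    (∀ d' d : ℝ, -1 < d' → d' ≤ d → d' ≠ 0 → d ≠ 0 →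
      expRedundancy n d' p l ≤ expRedundancy n d p l) ∧
    (∀ d : ℝ, -1 < d → d < 0 →
      expRedundancy n d p l ≤ (∑ i, p i * (l i : ℝ)) - shannonEntropy n p) ∧
    (∀ d : ℝ, 0 < d →
      (∑ i, p i * (l i : ℝ)) - shannonEntropy n p ≤ expRedundancy n d p l) :=
  stmt_15_general n p hp hpsum l
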